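/- Let G be a finite simple connected graph with independence number α(G) = 3 that contains no induced cycle C₇ on seven vertices. Then G has a connected dominating set D with |D| ≤ 4. -/

import Mathlib

/-- A set of vertices is independent if its vertices are pairwise nonadjacent. -/
def SimpleGraph.IsIndepSet' {V : Type*} (G : SimpleGraph V) (s : Finset V) : Prop :=
  ∀ a ∈ s, ∀ b ∈ s, a ≠ b → ¬ G.Adj a b

/-- The independence number of `G`: the largest cardinality of an independent set. -/
noncomputable def SimpleGraph.indepNum' {V : Type*} (G : SimpleGraph V) : ℕ :=
  sSup {n | ∃ s : Finset V, G.IsIndepSet' s ∧ s.card = n}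

/-- `G` contains an induced (chordless) cycle on `n` vertices. -/
def SimpleGraph.HasInducedCycle {V : Type*} (G : SimpleGraph V) (n : ℕ) : Prop :=
  ∃ f : ZMod n → V, Function.Injective f ∧
    ∀ i j : ZMod n, G.Adj (f i) (f j) ↔ (j = i + 1 ∨ i = j + 1)

/-- A vertex is simplicial if its neighbourhood induces a complete subgraph. -/
def SimpleGraph.IsSimplicial {V : Type*} (G : SimpleGraph V) (v : V) : Prop :=
  ∀ a ∈ G.neighborSet v, ∀ b ∈ G.neighborSet v, a ≠ b → G.Adj a b

/-- A graph is claw-free if no vertex has three pairwise nonadjacent neighbors. -/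
def SimpleGraph.ClawFree {V : Type*} (G : SimpleGraph V) : Prop :=
  ¬ ∃ c x y z : V, x ≠ y ∧ x ≠ z ∧ y ≠ z ∧
    G.Adj c x ∧ G.Adj c y ∧ G.Adj c z ∧ ¬ G.Adj x y ∧ ¬ G.Adj x z ∧ ¬ G.Adj y z

/-!
A maximum independent set `{a, b, c}` dominates `G`.

If `G` contains an induced path `x₀ x₁ x₂ x₃ x₄`, then `{x₀, x₂, x₄}` is dominating. Should both
ends have private neighbours `u` of `x₀` and `w` of `x₄`, either `uw` is an edge and closes an
induced `C₇`, or `{u, x₁, x₃, w}` is independent; so one end can be dropped and the remaining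
induced `P₄` dominates.

If `G` is `P₅`-free, the workhorse is: for an induced path `s d₀ d₁ d₂`, every neighbour of `s` is
adjacent to one of `d₀, d₁, d₂`. A case analysis on which of `a, b, c` have common neighbours,
together with an edge leaving the closed neighbourhood of `c` (which exists by connectivity), then
always yields a dominating induced `P₄` or a dominating star `K₁,₃`.
-/

namespace SimpleGraph

variable {V : Type*} {G : SimpleGraph V}

section Independence

variable [Fintype V]

theorem bddAbove_card_isIndepSet' :
    BddAbove {n | ∃ s : Finset V, G.IsIndepSet' s ∧ s.card = n} :=
  ⟨Fintype.card V, by rintro n ⟨s, -, rfl⟩; exact s.card_le_univ⟩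

theorem IsIndepSet'.card_le_indepNum' {s : Finset V} (hs : G.IsIndepSet' s) :
    s.card ≤ G.indepNum' :=
  le_csSup bddAbove_card_isIndepSet' ⟨s, hs, rfl⟩

theorem exists_isIndepSet'_card_eq_indepNum' :
    ∃ s : Finset V, G.IsIndepSet' s ∧ s.card = G.indepNum' :=
  Nat.sSup_mem (s := {n | ∃ s : Finset V, G.IsIndepSet' s ∧ s.card = n})
    ⟨0, ∅, by simp [IsIndepSet'], rfl⟩ bddAbove_card_isIndepSet'

end Independence

def Dominates (G : SimpleGraph V) (D : Finset V) (v : V) : Prop :=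
  v ∈ D ∨ ∃ d ∈ D, G.Adj v d

def IsConnectedDominating (G : SimpleGraph V) (D : Finset V) : Prop :=
  (G.induce (D : Set V)).Connected ∧ ∀ v, G.Dominates D v

@[simp]
theorem dominates_singleton {d v : V} : G.Dominates {d} v ↔ v = d ∨ G.Adj v d := by
  simp [Dominates]

@[simp]
theorem dominates_insert [DecidableEq V] {D : Finset V} {d v : V} :
    G.Dominates (insert d D) v ↔ v = d ∨ G.Adj v d ∨ G.Dominates D v := by
  rw [Dominates, Dominates, Finset.exists_mem_insert, Finset.mem_insert]
  tauto

theorem Dominates.mono {D D' : Finset V} {v : V} (hv : G.Dominates D v) (h : D ⊆ D') :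
    G.Dominates D' v :=
  hv.imp (@h v) fun ⟨d, hd, hvd⟩ => ⟨d, h hd, hvd⟩

theorem Dominates.trans {S D : Finset V} {v : V} (hv : G.Dominates S v)
    (hSD : ∀ s ∈ S, ∀ w, G.Dominates {s} w → G.Dominates D w) : G.Dominates D v := by
  rcases hv with hv | ⟨s, hs, hvs⟩
  · exact hSD v hv v (by simp)
  · exact hSD s hs v (by simp [hvs])

theorem IsIndepSet'.dominates [Fintype V] [DecidableEq V] {s : Finset V}
    (hs : G.IsIndepSet' s) (hmax : G.indepNum' ≤ s.card) (v : V) : G.Dominates s v := by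
  by_contra hv
  simp only [Dominates, not_or, not_exists, not_and] at hv
  have hins : G.IsIndepSet' (insert v s) := by
    intro x hx y hy hxy
    rw [Finset.mem_insert] at hx hy
    rcases hx with rfl | hx <;> rcases hy with rfl | hy
    · exact absurd rfl hxy
    · exact hv.2 y hy
    · exact fun h => hv.2 x hx h.symm
    · exact hs x hx y hy hxy
  have := hins.card_le_indepNum'
  rw [Finset.card_insert_of_notMem hv.1] at this
  omega

theorem dominates_of_indepNum'_le_three [Fintype V] [DecidableEq V] (hα : G.indepNum' ≤ 3)
    {a b c : V} (hab : a ≠ b) (hac : a ≠ c) (hbc : b ≠ c)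
    (nab : ¬G.Adj a b) (nac : ¬G.Adj a c) (nbc : ¬G.Adj b c) (v : V) :
    G.Dominates {a, b, c} v := by
  refine IsIndepSet'.dominates ?_ ?_ v
  · intro x hx y hy hxy
    simp only [Finset.mem_insert, Finset.mem_singleton] at hx hy
    rcases hx with rfl | rfl | rfl <;> rcases hy with rfl | rfl | rfl <;>
      simp_all [G.adj_comm]
  · rwa [Finset.card_eq_three.mpr ⟨a, b, c, hab, hac, hbc, rfl⟩]

theorem hasInducedCycle_seven (f : ZMod 7 → V) (hadj : ∀ i, G.Adj (f i) (f (i + 1)))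
    (hnon₂ : ∀ i, ¬G.Adj (f i) (f (i + 2))) (hnon₃ : ∀ i, ¬G.Adj (f i) (f (i + 3))) :
    G.HasInducedCycle 7 := by
  have hiff : ∀ i j, G.Adj (f i) (f j) ↔ (j = i + 1 ∨ i = j + 1) := by
    intro i j
    obtain ⟨d, rfl⟩ : ∃ d, j = i + d := ⟨j - i, by ring⟩
    rw [show (i + d = i + 1 ∨ i = i + d + 1) ↔ (d = 1 ∨ d = 6) by revert i d; decide]
    have wrap : ∀ k l : ZMod 7, k + l = 0 → i + k + l = i := fun k l h => by
      rw [add_assoc, h, add_zero]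
    obtain rfl | rfl | rfl | rfl | rfl | rfl | rfl :
        d = 0 ∨ d = 1 ∨ d = 2 ∨ d = 3 ∨ d = 4 ∨ d = 5 ∨ d = 6 := by revert d; decide
    · exact iff_of_false (by simp) (by decide)
    · exact iff_of_true (hadj i) (by decide)
    · exact iff_of_false (hnon₂ i) (by decide)
    · exact iff_of_false (hnon₃ i) (by decide)
    · refine iff_of_false (fun h => hnon₃ (i + 4) ?_) (by decide)
      rwa [wrap 4 3 rfl, G.adj_comm]
    · refine iff_of_false (fun h => hnon₂ (i + 5) ?_) (by decide)
      rwa [wrap 5 2 rfl, G.adj_comm]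
    · refine iff_of_true ?_ (by decide)
      have h := hadj (i + 6)
      rwa [wrap 6 1 rfl, G.adj_comm] at h
  refine ⟨f, fun i j hij => ?_, hiff⟩
  have key : ∀ k, (k = i + 1 ∨ i = k + 1) ↔ (k = j + 1 ∨ j = k + 1) := fun k => by
    rw [← hiff, ← hiff, hij]
  -- on a 7-cycle a vertex is determined by its two neighbours
  exact (by decide : ∀ i j : ZMod 7,
    (∀ k, (k = i + 1 ∨ i = k + 1) ↔ (k = j + 1 ∨ j = k + 1)) → i = j) i j key

theorem connected_induce_insert [DecidableEq V] {s : Finset V} {x y : V}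
    (hs : (G.induce (s : Set V)).Connected) (hy : y ∈ s) (hxy : G.Adj x y) :
    (G.induce ((insert x s : Finset V) : Set V)).Connected := by
  have := induce_union_connected (induce_pair_connected_of_adj hxy).preconnected
    hs.preconnected ⟨y, by simp, hy⟩
  rwa [Set.insert_union, Set.singleton_union, Set.insert_eq_of_mem (a := y) (by exact hy),
    ← Finset.coe_insert] at this

theorem exists_isConnectedDominating_path [DecidableEq V] {a b c d : V}
    (hab : G.Adj a b) (hbc : G.Adj b c) (hcd : G.Adj c d)
    (hdom : ∀ v, G.Dominates {a, b, c, d} v) :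
    ∃ D : Finset V, D.card ≤ 4 ∧ G.IsConnectedDominating D := by
  refine ⟨_, Finset.card_le_four, connected_induce_insert
    (connected_induce_insert ?_ (by simp) hbc) (by simp) hab, hdom⟩
  rw [Finset.coe_pair]
  exact induce_pair_connected_of_adj hcd

theorem exists_isConnectedDominating_star [DecidableEq V] {a b c x : V}
    (ha : G.Adj a x) (hb : G.Adj b x) (hc : G.Adj c x)
    (hdom : ∀ v, G.Dominates {a, b, c, x} v) :
    ∃ D : Finset V, D.card ≤ 4 ∧ G.IsConnectedDominating D := by
  refine ⟨_, Finset.card_le_four, connected_induce_insert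
    (connected_induce_insert ?_ (by simp) hb) (by simp) ha, hdom⟩
  rw [Finset.coe_pair]
  exact induce_pair_connected_of_adj hc

theorem Connected.exists_adj_adj_not_dominates (hconn : G.Connected) {a c : V}
    (ha : ¬G.Dominates {c} a) :
    ∃ z₁ z₂, G.Adj z₁ c ∧ G.Adj z₁ z₂ ∧ ¬G.Dominates {c} z₂ := by
  obtain ⟨p⟩ := hconn.preconnected c a
  obtain ⟨d, -, hd₁, hd₂⟩ := p.exists_boundary_dart {z | G.Dominates {c} z} (by simp) ha
  simp only [Set.mem_ofPred_eq, dominates_singleton] at hd₁ hd₂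
  rcases hd₁ with h | h
  · exact absurd (Or.inr (h ▸ d.adj).symm) hd₂
  · exact ⟨_, _, h, d.adj, by simpa using hd₂⟩

def IsInducedP4 (G : SimpleGraph V) (y₀ y₁ y₂ y₃ : V) : Prop :=
  G.Adj y₀ y₁ ∧ G.Adj y₁ y₂ ∧ G.Adj y₂ y₃ ∧ ¬G.Adj y₀ y₂ ∧ ¬G.Adj y₀ y₃ ∧ ¬G.Adj y₁ y₃

def IsInducedP5 (G : SimpleGraph V) (y₀ y₁ y₂ y₃ y₄ : V) : Prop :=
  G.Adj y₀ y₁ ∧ G.Adj y₁ y₂ ∧ G.Adj y₂ y₃ ∧ G.Adj y₃ y₄ ∧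
    ¬G.Adj y₀ y₂ ∧ ¬G.Adj y₀ y₃ ∧ ¬G.Adj y₀ y₄ ∧ ¬G.Adj y₁ y₃ ∧ ¬G.Adj y₁ y₄ ∧ ¬G.Adj y₂ y₄

def P5Free (G : SimpleGraph V) : Prop :=
  ∀ y₀ y₁ y₂ y₃ y₄, ¬G.IsInducedP5 y₀ y₁ y₂ y₃ y₄

theorem IsInducedP5.reverse {y₀ y₁ y₂ y₃ y₄ : V} (h : G.IsInducedP5 y₀ y₁ y₂ y₃ y₄) :
    G.IsInducedP5 y₄ y₃ y₂ y₁ y₀ := by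
  obtain ⟨h₀₁, h₁₂, h₂₃, h₃₄, n₀₂, n₀₃, n₀₄, n₁₃, n₁₄, n₂₄⟩ := h
  exact ⟨h₃₄.symm, h₂₃.symm, h₁₂.symm, h₀₁.symm, fun h => n₂₄ h.symm, fun h => n₁₄ h.symm,
    fun h => n₀₄ h.symm, fun h => n₁₃ h.symm, fun h => n₀₃ h.symm, fun h => n₀₂ h.symm⟩

theorem P5Free.adj_of_isInducedP4 (hG : G.P5Free) {r s d₀ d₁ d₂ : V}
    (hP : G.IsInducedP4 s d₀ d₁ d₂) (hr : G.Adj r s) :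
    G.Adj r d₀ ∨ G.Adj r d₁ ∨ G.Adj r d₂ := by
  obtain ⟨h₀, h₁, h₂, n₁, n₂, n₀₂⟩ := hP
  by_contra! h
  exact hG r s d₀ d₁ d₂ ⟨hr, h₀, h₁, h₂, h.1, h.2.1, h.2.2, n₁, n₂, n₀₂⟩

theorem P5Free.dominates_of_isInducedP4 (hG : G.P5Free) {D : Finset V} {s d₀ d₁ d₂ : V}
    (hP : G.IsInducedP4 s d₀ d₁ d₂) (h₀ : d₀ ∈ D) (h₁ : d₁ ∈ D) (h₂ : d₂ ∈ D) (v : V)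
    (hv : G.Dominates {s} v) : G.Dominates D v := by
  rw [dominates_singleton] at hv
  rcases hv with rfl | hv
  · exact .inr ⟨d₀, h₀, hP.1⟩
  · rcases hG.adj_of_isInducedP4 hP hv with h | h | h
    exacts [.inr ⟨d₀, h₀, h⟩, .inr ⟨d₁, h₁, h⟩, .inr ⟨d₂, h₂, h⟩]

theorem P5Free.adj_of_adj_of_commonNeighbor (hG : G.P5Free) {p q c x z₁ z₂ : V}
    (hxp : G.Adj x p) (hxq : G.Adj x q) (npq : ¬G.Adj p q) (nqc : ¬G.Adj q c)
    (hxc : ¬G.Adj x c) (hz₁c : G.Adj z₁ c) (hxz₁ : ¬G.Adj x z₁) (hz₁p : ¬G.Adj z₁ p)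
    (hz₁q : ¬G.Adj z₁ q) (hz₁₂ : G.Adj z₁ z₂) (hz₂c : ¬G.Adj z₂ c) (hz₂p : G.Adj z₂ p) :
    G.Adj z₂ q := by
  by_contra hz₂q
  by_cases hxz₂ : G.Adj x z₂
  · rcases hG.adj_of_isInducedP4 ⟨hxz₂, hz₁₂.symm, hz₁c, hxz₁, hxc, hz₂c⟩ hxq.symm
      with h | h | h
    exacts [hz₂q h.symm, hz₁q h.symm, nqc h]
  · rcases hG.adj_of_isInducedP4 ⟨hz₂p, hxp.symm, hxq, fun h => hxz₂ h.symm, hz₂q, npq⟩ hz₁₂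
      with h | h | h
    exacts [hz₁p h, hxz₁ h.symm, hz₁q h]

theorem P5Free.dominates_pair_of_isInducedP4 [DecidableEq V] (hG : G.P5Free) {a u v b w : V}
    (hP : G.IsInducedP4 a u v b) (hab : ∀ z, G.Adj z a → ¬G.Adj z b)
    (hw : G.Dominates {a, b} w) : G.Dominates {u, v} w := by
  obtain ⟨hau, huv, hvb, nav, nab, nub⟩ := hP
  simp only [dominates_insert, dominates_singleton] at hw ⊢
  rcases hw with rfl | hwa | rfl | hwb
  · exact .inr (.inl hau)
  · rcases hG.adj_of_isInducedP4 ⟨hau, huv, hvb, nav, nab, nub⟩ hwa with h | h | h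
    exacts [.inr (.inl h), .inr (.inr (.inr h)), absurd h (hab w hwa)]
  · exact .inr (.inr (.inr hvb.symm))
  · rcases hG.adj_of_isInducedP4 ⟨hvb.symm, huv.symm, hau.symm, fun h => nub h.symm,
      fun h => nab h.symm, fun h => nav h.symm⟩ hwb with h | h | h
    exacts [.inr (.inr (.inr h)), .inr (.inl h), absurd hwb (hab w h)]

section IndependentTriple

variable [DecidableEq V] {a b c : V}

theorem P5Free.exists_isConnectedDominating_of_two_commonNeighbors (hG : G.P5Free)
    (hS : ∀ v, G.Dominates {a, b, c} v) (nab : ¬G.Adj a b) (nac : ¬G.Adj a c)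
    (nbc : ¬G.Adj b c) {x y : V} (hxa : G.Adj x a) (hxb : G.Adj x b) (hxc : ¬G.Adj x c)
    (hyb : G.Adj y b) (hyc : G.Adj y c) (hya : ¬G.Adj y a) :
    ∃ D : Finset V, D.card ≤ 4 ∧ G.IsConnectedDominating D := by
  by_cases hxy : G.Adj x y
  · refine exists_isConnectedDominating_path hxa.symm hxb hyb.symm fun v => (hS v).trans ?_
    simp only [Finset.mem_insert, Finset.mem_singleton, forall_eq_or_imp, forall_eq]
    exact ⟨fun w hw => hw.mono (by simp), fun w hw => hw.mono (by simp),
      hG.dominates_of_isInducedP4 ⟨hyc.symm, hxy.symm, hxa, fun h => hxc h.symm,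
        fun h => nac h.symm, hya⟩ (by simp) (by simp) (by simp)⟩
  · exact (hG a x b y c ⟨hxa.symm, hxb, hyb.symm, hyc, nab, fun h => hya h.symm, nac, hxy,
      hxc, nbc⟩).elim

theorem P5Free.exists_isConnectedDominating_of_commonNeighbor (hconn : G.Connected)
    (hG : G.P5Free) (hS : ∀ v, G.Dominates {a, b, c} v) (hac : a ≠ c) (nab : ¬G.Adj a b)
    (nac : ¬G.Adj a c) (nbc : ¬G.Adj b c) (hA : ∀ z, G.Adj z a → G.Adj z b → ¬G.Adj z c)
    {x : V} (hxa : G.Adj x a) (hxb : G.Adj x b) :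
    ∃ D : Finset V, D.card ≤ 4 ∧ G.IsConnectedDominating D := by
  have hxc := hA x hxa hxb
  obtain ⟨z₁, z₂, hz₁c, hz₁₂, hz₂⟩ := hconn.exists_adj_adj_not_dominates (a := a) (c := c)
    (by simp [hac, nac])
  have hz₂c : ¬G.Adj z₂ c := fun h => hz₂ (by simp [h])
  by_cases hz₁a : G.Adj z₁ a
  · exact hG.exists_isConnectedDominating_of_two_commonNeighbors
      (fun v => (hS v).mono (by simp [Finset.insert_subset_iff])) (fun h => nab h.symm) nbc nac
      hxb hxa hxc hz₁a hz₁c fun h => hA z₁ hz₁a h hz₁c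
  by_cases hz₁b : G.Adj z₁ b
  · exact hG.exists_isConnectedDominating_of_two_commonNeighbors hS nab nac nbc hxa hxb hxc
      hz₁b hz₁c hz₁a
  by_cases hxz₁ : G.Adj x z₁
  · refine exists_isConnectedDominating_path hxb.symm hxz₁ hz₁c fun v => (hS v).trans ?_
    simp only [Finset.mem_insert, Finset.mem_singleton, forall_eq_or_imp, forall_eq]
    exact ⟨hG.dominates_of_isInducedP4 ⟨hxa.symm, hxz₁, hz₁c, fun h => hz₁a h.symm, nac, hxc⟩
      (by simp) (by simp) (by simp), fun w hw => hw.mono (by simp), fun w hw => hw.mono (by simp)⟩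
  have hz₂a_b : G.Adj z₂ a ∧ G.Adj z₂ b := by
    have := hS z₂
    simp only [dominates_insert, dominates_singleton] at this
    rcases this with rfl | h | rfl | h | rfl | h
    · exact absurd hz₁₂ hz₁a
    · exact ⟨h, hG.adj_of_adj_of_commonNeighbor hxa hxb nab nbc hxc hz₁c hxz₁ hz₁a hz₁b hz₁₂
        hz₂c h⟩
    · exact absurd hz₁₂ hz₁b
    · exact ⟨hG.adj_of_adj_of_commonNeighbor hxb hxa (fun h => nab h.symm) nac hxc hz₁c hxz₁
        hz₁b hz₁a hz₁₂ hz₂c h, h⟩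
    · exact (hz₂ (by simp)).elim
    · exact absurd h hz₂c
  refine exists_isConnectedDominating_star hz₂a_b.1.symm hz₂a_b.2.symm hz₁₂
    fun v => (hS v).trans ?_
  simp only [Finset.mem_insert, Finset.mem_singleton, forall_eq_or_imp, forall_eq]
  exact ⟨fun w hw => hw.mono (by simp), fun w hw => hw.mono (by simp),
    hG.dominates_of_isInducedP4 ⟨hz₁c.symm, hz₁₂, hz₂a_b.1, fun h => hz₂c h.symm,
      fun h => nac h.symm, hz₁a⟩ (by simp) (by simp) (by simp)⟩

theorem P5Free.exists_isConnectedDominating_of_adj_adj_adj (hconn : G.Connected)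
    (hG : G.P5Free) (hS : ∀ v, G.Dominates {a, b, c} v) (hac : a ≠ c) (nab : ¬G.Adj a b)
    (nac : ¬G.Adj a c) (hAB : ∀ z, G.Adj z a → ¬G.Adj z b) (hAC : ∀ z, G.Adj z a → ¬G.Adj z c)
    (hBC : ∀ z, G.Adj z b → ¬G.Adj z c) {u v : V} (hua : G.Adj u a) (huv : G.Adj u v)
    (hvb : G.Adj v b) :
    ∃ D : Finset V, D.card ≤ 4 ∧ G.IsConnectedDominating D := by
  have hva : ¬G.Adj v a := fun h => hAB v h hvb
  have huc := hAC u hua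
  have hvc := hBC v hvb
  have hab_uv : ∀ w, G.Dominates {a, b} w → G.Dominates {u, v} w := fun w =>
    hG.dominates_pair_of_isInducedP4 ⟨hua.symm, huv, hvb, fun h => hva h.symm, nab, hAB u hua⟩ hAB
  have hdom : ∀ D : Finset V, u ∈ D → v ∈ D → (∀ w, G.Dominates {c} w → G.Dominates D w) →
      ∀ w, G.Dominates D w := by
    intro D hu hv hc w
    have hD : ∀ w, G.Dominates {a, b} w → G.Dominates D w := fun w hw =>
      (hab_uv w hw).mono (by simp [Finset.insert_subset_iff, hu, hv])
    refine (hS w).trans ?_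
    simp only [Finset.mem_insert, Finset.mem_singleton, forall_eq_or_imp, forall_eq]
    exact ⟨fun w hw => hD w (hw.mono (by simp)), fun w hw => hD w (hw.mono (by simp)), hc⟩
  obtain ⟨z₁, z₂, hz₁c, hz₁₂, hz₂⟩ := hconn.exists_adj_adj_not_dominates (a := a) (c := c)
    (by simp [hac, nac])
  by_cases hz₁u : G.Adj z₁ u
  · exact exists_isConnectedDominating_path huv.symm hz₁u.symm hz₁c
      (hdom _ (by simp) (by simp) fun w hw => hw.mono (by simp))
  by_cases hz₁v : G.Adj z₁ v
  · exact exists_isConnectedDominating_path huv hz₁v.symm hz₁c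
      (hdom _ (by simp) (by simp) fun w hw => hw.mono (by simp))
  have hcz₂ : ¬G.Adj c z₂ := fun h => hz₂ (by simp [h.symm])
  have hz₂uv : G.Adj z₂ u ∨ G.Adj z₂ v := by
    have h := hab_uv z₂ (by have := hS z₂; simp_all)
    simp only [dominates_insert, dominates_singleton] at h
    rcases h with rfl | h | rfl | h
    exacts [absurd hz₁₂ hz₁u, .inl h, absurd hz₁₂ hz₁v, .inr h]
  rcases hz₂uv with h | h
  · exact exists_isConnectedDominating_path huv.symm h.symm hz₁₂.symm
      (hdom _ (by simp) (by simp) (hG.dominates_of_isInducedP4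
        ⟨hz₁c.symm, hz₁₂, h, hcz₂, fun h => huc h.symm, hz₁u⟩ (by simp) (by simp) (by simp)))
  · exact exists_isConnectedDominating_path huv h.symm hz₁₂.symm
      (hdom _ (by simp) (by simp) (hG.dominates_of_isInducedP4
        ⟨hz₁c.symm, hz₁₂, h, hcz₂, fun h => hvc h.symm, hz₁v⟩ (by simp) (by simp) (by simp)))

theorem P5Free.exists_isConnectedDominating (hconn : G.Connected) (hG : G.P5Free)
    (hS : ∀ v, G.Dominates {a, b, c} v) (hab : a ≠ b) (hac : a ≠ c) (hbc : b ≠ c)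
    (nab : ¬G.Adj a b) (nac : ¬G.Adj a c) (nbc : ¬G.Adj b c) :
    ∃ D : Finset V, D.card ≤ 4 ∧ G.IsConnectedDominating D := by
  by_cases hA : ∃ x, G.Adj x a ∧ G.Adj x b ∧ G.Adj x c
  · obtain ⟨x, hxa, hxb, hxc⟩ := hA
    exact exists_isConnectedDominating_star hxa.symm hxb.symm hxc.symm fun v =>
      (hS v).mono (by simp [Finset.insert_subset_iff])
  push Not at hA
  by_cases hAB : ∃ x, G.Adj x a ∧ G.Adj x b
  · obtain ⟨x, hxa, hxb⟩ := hAB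
    exact hG.exists_isConnectedDominating_of_commonNeighbor hconn hS hac nab nac nbc hA hxa hxb
  by_cases hAC : ∃ x, G.Adj x a ∧ G.Adj x c
  · obtain ⟨x, hxa, hxc⟩ := hAC
    exact hG.exists_isConnectedDominating_of_commonNeighbor hconn
      (fun v => (hS v).mono (by simp [Finset.insert_subset_iff]))
      hab nac nab (fun h => nbc h.symm) (fun z h₁ h₂ h₃ => hA z h₁ h₃ h₂) hxa hxc
  by_cases hBC : ∃ x, G.Adj x b ∧ G.Adj x c
  · obtain ⟨x, hxb, hxc⟩ := hBC
    exact hG.exists_isConnectedDominating_of_commonNeighbor hconn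
      (fun v => (hS v).mono (by simp [Finset.insert_subset_iff])) hab.symm nbc
      (fun h => nab h.symm) (fun h => nac h.symm) (fun z h₁ h₂ h₃ => hA z h₃ h₁ h₂) hxb hxc
  push Not at hAB hAC hBC
  obtain ⟨u, w, hua, huw, hw⟩ := hconn.exists_adj_adj_not_dominates (a := b) (c := a)
    (by rw [dominates_singleton]; exact not_or.mpr ⟨hab.symm, fun h => nab h.symm⟩)
  have := hS w
  simp only [dominates_insert, dominates_singleton] at this hw
  rcases this with rfl | h | rfl | h | rfl | h
  · exact absurd (Or.inl rfl) hw
  · exact absurd (Or.inr h) hw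
  · exact absurd huw (hAB u hua)
  · exact hG.exists_isConnectedDominating_of_adj_adj_adj hconn hS hac nab nac hAB hAC hBC
      hua huw h
  · exact absurd huw (hAC u hua)
  · exact hG.exists_isConnectedDominating_of_adj_adj_adj hconn
      (fun v => (hS v).mono (by simp [Finset.insert_subset_iff]))
      hab nac nab hAC hAB (fun z h₁ h₂ => hBC z h₂ h₁) hua huw h

end IndependentTriple

section InducedP5

variable [Fintype V] [DecidableEq V] {x₀ x₁ x₂ x₃ x₄ : V}

theorem exists_isConnectedDominating_of_isInducedP5_of_no_private_neighbor
    (hα : G.indepNum' ≤ 3) (hP : G.IsInducedP5 x₀ x₁ x₂ x₃ x₄)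
    (h₄ : ∀ w, G.Adj w x₄ → G.Adj w x₀ ∨ G.Adj w x₁ ∨ G.Adj w x₂ ∨ G.Adj w x₃) :
    ∃ D : Finset V, D.card ≤ 4 ∧ G.IsConnectedDominating D := by
  obtain ⟨h₀₁, h₁₂, h₂₃, h₃₄, n₀₂, n₀₃, n₀₄, n₁₃, n₁₄, n₂₄⟩ := hP
  have hdom := dominates_of_indepNum'_le_three hα (G.ne_of_adj_of_not_adj h₂₃ n₀₃).symm
    (G.ne_of_adj_of_not_adj h₃₄.symm n₀₃).symm
    (G.ne_of_adj_of_not_adj h₁₂.symm fun h => n₁₄ h.symm) n₀₂ n₀₄ n₂₄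
  refine exists_isConnectedDominating_path h₀₁ h₁₂ h₂₃ fun v => (hdom v).trans ?_
  simp only [Finset.mem_insert, Finset.mem_singleton, forall_eq_or_imp, forall_eq]
  refine ⟨fun w hw => hw.mono (by simp), fun w hw => hw.mono (by simp), fun w hw => ?_⟩
  simp only [dominates_insert, dominates_singleton] at hw ⊢
  rcases hw with rfl | hw
  · simp [h₃₄.symm]
  · rcases h₄ w hw with h | h | h | h <;> simp [h]

theorem exists_isConnectedDominating_of_isInducedP5 (hα : G.indepNum' ≤ 3)
    (hC7 : ¬G.HasInducedCycle 7) (hP : G.IsInducedP5 x₀ x₁ x₂ x₃ x₄) :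
    ∃ D : Finset V, D.card ≤ 4 ∧ G.IsConnectedDominating D := by
  by_cases h₄ : ∀ w, G.Adj w x₄ → G.Adj w x₀ ∨ G.Adj w x₁ ∨ G.Adj w x₂ ∨ G.Adj w x₃
  · exact exists_isConnectedDominating_of_isInducedP5_of_no_private_neighbor hα hP h₄
  by_cases h₀ : ∀ u, G.Adj u x₀ → G.Adj u x₄ ∨ G.Adj u x₃ ∨ G.Adj u x₂ ∨ G.Adj u x₁
  · exact exists_isConnectedDominating_of_isInducedP5_of_no_private_neighbor hα hP.reverse h₀
  exfalso
  push Not at h₄ h₀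
  obtain ⟨w, hw₄, hw₀, hw₁, hw₂, hw₃⟩ := h₄
  obtain ⟨u, hu₀, hu₄, hu₃, hu₂, hu₁⟩ := h₀
  obtain ⟨h₀₁, h₁₂, h₂₃, h₃₄, n₀₂, n₀₃, n₀₄, n₁₃, n₁₄, n₂₄⟩ := hP
  by_cases huw : G.Adj u w
  · refine hC7 (hasInducedCycle_seven ![u, x₀, x₁, x₂, x₃, x₄, w] ?_ ?_ ?_) <;> intro i <;>
      fin_cases i
    exacts [hu₀, h₀₁, h₁₂, h₂₃, h₃₄, hw₄.symm, huw.symm,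
      hu₁, n₀₂, n₁₃, n₂₄, fun h => hw₃ h.symm, fun h => hu₄ h.symm, hw₀,
      hu₂, n₀₃, n₁₄, fun h => hw₂ h.symm, fun h => hu₃ h.symm, fun h => n₀₄ h.symm, hw₁]
  · have := dominates_of_indepNum'_le_three hα (G.ne_of_adj_of_not_adj h₃₄ n₁₄).symm
      (G.ne_of_adj_of_not_adj h₀₁.symm hw₀) (G.ne_of_adj_of_not_adj h₂₃.symm hw₂) n₁₃
      (fun h => hw₁ h.symm) (fun h => hw₃ h.symm) u
    simp only [dominates_insert, dominates_singleton] at this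
    rcases this with rfl | h | rfl | h | rfl | h
    exacts [hu₂ h₁₂, hu₁ h, hu₂ h₂₃.symm, hu₃ h, hw₀ hu₀, huw h]

end InducedP5

end SimpleGraph

/-- If `G` is a finite simple connected graph with independence number 3 and no induced `C₇`,
then `G` has a connected dominating set of at most 4 vertices. -/
theorem stmt_3 {V : Type*} [Fintype V] (G : SimpleGraph V)
    (hconn : G.Connected) (hα : G.indepNum' = 3) (hC7 : ¬ G.HasInducedCycle 7) :
    ∃ D : Finset V, D.card ≤ 4 ∧
      (G.induce (D : Set V)).Connected ∧
      (∀ u : V, u ∈ D ∨ ∃ d ∈ D, G.Adj u d) := by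
  classical
  suffices ∃ D : Finset V, D.card ≤ 4 ∧ G.IsConnectedDominating D from this
  by_cases hP5 : G.P5Free
  · obtain ⟨s, hs, hcard⟩ := G.exists_isIndepSet'_card_eq_indepNum'
    obtain ⟨a, b, c, hab, hac, hbc, rfl⟩ := Finset.card_eq_three.mp (hcard.trans hα)
    have nab := hs a (by simp) b (by simp) hab
    have nac := hs a (by simp) c (by simp) hac
    have nbc := hs b (by simp) c (by simp) hbc
    exact hP5.exists_isConnectedDominating hconn (hs.dominates hcard.ge) hab hac hbc nab nac nbc
  · simp only [SimpleGraph.P5Free, not_forall, not_not] at hP5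
    obtain ⟨x₀, x₁, x₂, x₃, x₄, hP⟩ := hP5
    exact SimpleGraph.exists_isConnectedDominating_of_isInducedP5 hα.le hC7 hP
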